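/- For the Variance Gamma Lévy density restricted to x > 0, ν(x) = C e^{-Mx}/x with C > 0, M > 1: lim_{k↘1} ∫_0^1 [(t - k) J(t,M) + (1-t) J(t,M-1)] dt where J(t,a) = C ∫_{log((k-t)/(1-t))}^∞ e^{-ay} dy/y, evaluated at k = K/S_0, equals C·arctanh(1/(2M-1)). -/

import Mathlib

open Real MeasureTheory Set Filter Topology

/-- `J(k, t, a) = C ∫_{log((k-t)/(1-t))}^∞ e^{-ay}/y dy`. -/
noncomputable def Jfun (C k t a : ℝ) : ℝ :=
  C * ∫ y in Ioi (Real.log ((k - t) / (1 - t))), Real.exp (-a * y) * (1 / y)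

/-!
With `E_a(δ) = ∫_δ^∞ e^{-ay}/y dy` and `ℓ = log((k-t)/(1-t))`, the integrand is
`C((1-t)(E_{M-1}(ℓ) - E_M(ℓ)) + (1-k) E_M(ℓ))`. As `k ↘ 1` we have `ℓ ↘ 0` for every `t`,
and by Frullani's integral `E_{M-1}(δ) - E_M(δ)` increases to `log (M/(M-1))` as `δ ↘ 0`;
dominated convergence turns the first term into
`log (M/(M-1)) ∫₀¹ (1-t) dt = arctanh (1/(2M-1))`. Since `ℓ ≥ log k` and
`E_M(δ) ≤ log (1/δ) + 1/M`, the second term is `O((k-1) log (1/log k))`, which vanishes.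
-/

noncomputable def expIntegralTail (a δ : ℝ) : ℝ :=
  ∫ y in Ioi δ, exp (-a * y) * (1 / y)

section ExpIntegralTail

variable {a δ : ℝ}

lemma integrableOn_exp_mul_one_div_Ioi (ha : 0 < a) (hδ : 0 < δ) :
    IntegrableOn (fun y => exp (-a * y) * (1 / y)) (Ioi δ) := by
  refine ((exp_neg_integrableOn_Ioi δ ha).mul_const (1 / δ)).mono'
    (by fun_prop : Measurable fun y : ℝ => exp (-a * y) * (1 / y)).aestronglyMeasurable ?_
  filter_upwards [ae_restrict_mem measurableSet_Ioi] with y (hy : δ < y)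
  rw [norm_of_nonneg (by have := hδ.trans hy; positivity)]
  gcongr

lemma expIntegralTail_nonneg (hδ : 0 ≤ δ) : 0 ≤ expIntegralTail a δ :=
  setIntegral_nonneg measurableSet_Ioi fun y (hy : δ < y) => by
    have := hδ.trans_lt hy; positivity

lemma expIntegralTail_antitoneOn (ha : 0 < a) : AntitoneOn (expIntegralTail a) (Ioi 0) :=
  fun δ₁ (hδ₁ : 0 < δ₁) _ _ h => by
    refine setIntegral_mono_set (integrableOn_exp_mul_one_div_Ioi ha hδ₁) ?_
      (Ioi_subset_Ioi h).eventuallyLE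
    filter_upwards [ae_restrict_mem measurableSet_Ioi] with y (hy : δ₁ < y)
    have := hδ₁.trans hy; positivity

lemma continuousOn_expIntegralTail (ha : 0 < a) : ContinuousOn (expIntegralTail a) (Ioi 0) :=
  fun δ (hδ : 0 < δ) =>
    ((integrableOn_exp_mul_one_div_Ioi ha (half_pos hδ)).continuousOn_Ici_primitive_Ioi δ
      (half_le_self hδ.le)).continuousAt (Ici_mem_nhds (half_lt_self hδ)) |>.continuousWithinAt

lemma expIntegralTail_le (ha : 0 < a) (hδ : 0 < δ) (hδ1 : δ ≤ 1) :
    expIntegralTail a δ ≤ -log δ + 1 / a := by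
  have hint := integrableOn_exp_mul_one_div_Ioi ha hδ
  have hsplit : expIntegralTail a δ = (∫ y in δ..1, exp (-a * y) * (1 / y)) +
      ∫ y in Ioi 1, exp (-a * y) * (1 / y) := by
    rw [expIntegralTail, ← Ioc_union_Ioi_eq_Ioi hδ1, intervalIntegral.integral_of_le hδ1]
    exact setIntegral_union (Ioc_disjoint_Ioi le_rfl) measurableSet_Ioi
      (hint.mono_set Ioc_subset_Ioi_self) (hint.mono_set (Ioi_subset_Ioi hδ1))
  have hpos : ∀ y ∈ uIcc δ 1, y ≠ 0 := fun y hy => by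
    rw [uIcc_of_le hδ1] at hy; exact (hδ.trans_le hy.1).ne'
  have hnear : ∫ y in δ..1, exp (-a * y) * (1 / y) ≤ -log δ := calc
    _ ≤ ∫ y in δ..1, 1 / y := by
      refine intervalIntegral.integral_mono_on hδ1
        ((intervalIntegrable_iff_integrableOn_Ioc_of_le hδ1).2
          (hint.mono_set Ioc_subset_Ioi_self))
        (intervalIntegral.intervalIntegrable_one_div hpos continuousOn_id) fun y hy => ?_
      have hy0 : 0 < y := hδ.trans_le hy.1
      calc exp (-a * y) * (1 / y) ≤ 1 * (1 / y) := by
            gcongr; exact exp_le_one_iff.2 (by nlinarith)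
        _ = 1 / y := one_mul _
    _ = -log δ := by
      rw [integral_one_div fun h => hpos 0 h rfl, one_div, log_inv]
  have hfar : ∫ y in Ioi 1, exp (-a * y) * (1 / y) ≤ 1 / a := calc
    _ ≤ ∫ y in Ioi 1, exp (-a * y) := by
      refine setIntegral_mono_on (hint.mono_set (Ioi_subset_Ioi hδ1))
        (exp_neg_integrableOn_Ioi 1 ha) measurableSet_Ioi fun y (hy : 1 < y) => ?_
      calc exp (-a * y) * (1 / y) ≤ exp (-a * y) * 1 := by
            gcongr; exact div_le_one_of_le₀ hy.le (by linarith)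
        _ = exp (-a * y) := mul_one _
    _ = exp (-a) / a := by
      rw [integral_exp_mul_Ioi (neg_neg_of_pos ha)]; ring_nf
    _ ≤ 1 / a := by gcongr; exact exp_le_one_iff.2 (by linarith)
  linarith

lemma tendsto_mul_expIntegralTail_nhdsGT_zero (ha : 0 < a) :
    Tendsto (fun δ => δ * expIntegralTail a δ) (𝓝[>] 0) (𝓝 0) := by
  have hbound : Tendsto (fun δ => δ * (1 / a) - log δ * δ) (𝓝[>] 0) (𝓝 0) := by
    have hlog : Tendsto (fun δ => log δ * δ) (𝓝[>] 0) (𝓝 0) := by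
      simpa using tendsto_log_mul_rpow_nhdsGT_zero one_pos
    simpa using ((tendsto_id.mono_left nhdsWithin_le_nhds).mul_const (1 / a)).sub hlog
  refine squeeze_zero' ?_ ?_ hbound
  · filter_upwards [self_mem_nhdsWithin] with δ (hδ : 0 < δ)
    exact mul_nonneg hδ.le (expIntegralTail_nonneg hδ.le)
  · filter_upwards [Ioo_mem_nhdsGT one_pos] with δ hδ
    nlinarith [expIntegralTail_le ha hδ.1 hδ.2.le, hδ.1]

lemma tendsto_sub_one_mul_expIntegralTail_log_nhdsGT_one (ha : 0 < a) :
    Tendsto (fun k => (k - 1) * expIntegralTail a (log k)) (𝓝[>] 1) (𝓝 0) := by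
  have hlog : Tendsto log (𝓝[>] 1) (𝓝[>] 0) := by
    refine tendsto_nhdsWithin_iff.2 ⟨?_, eventually_nhdsWithin_of_forall fun k hk => log_pos hk⟩
    simpa using (continuousAt_log one_ne_zero).tendsto.mono_left nhdsWithin_le_nhds
  have hprod : Tendsto (fun k => k * (log k * expIntegralTail a (log k))) (𝓝[>] 1) (𝓝 0) := by
    simpa using (tendsto_id.mono_left nhdsWithin_le_nhds).mul
      ((tendsto_mul_expIntegralTail_nhdsGT_zero ha).comp hlog)
  refine squeeze_zero' ?_ ?_ hprod
  · filter_upwards [self_mem_nhdsWithin] with k (hk : 1 < k)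
    exact mul_nonneg (sub_nonneg.2 hk.le) (expIntegralTail_nonneg (log_pos hk).le)
  · filter_upwards [self_mem_nhdsWithin] with k (hk : 1 < k)
    have hk0 : 0 < k := one_pos.trans hk
    have hlin : k - 1 ≤ k * log k := by
      have h := mul_le_mul_of_nonneg_left (one_sub_inv_le_log_of_pos hk0) hk0.le
      rwa [mul_sub, mul_one, mul_inv_cancel₀ hk0.ne'] at h
    calc (k - 1) * expIntegralTail a (log k)
        ≤ k * log k * expIntegralTail a (log k) :=
          mul_le_mul_of_nonneg_right hlin (expIntegralTail_nonneg (log_pos hk).le)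
      _ = k * (log k * expIntegralTail a (log k)) := mul_assoc _ _ _

end ExpIntegralTail

section Frullani

variable {a b y δ : ℝ}

lemma exp_mul_one_div_sub_nonneg (hab : a ≤ b) (hy : 0 ≤ y) :
    0 ≤ exp (-a * y) * (1 / y) - exp (-b * y) * (1 / y) :=
  sub_nonneg.2 <| by gcongr

lemma exp_mul_one_div_sub_le (hy : 0 < y) :
    exp (-a * y) * (1 / y) - exp (-b * y) * (1 / y) ≤ (b - a) * exp (-a * y) := by
  have hsplit : exp (-b * y) = exp (-a * y) * exp (-((b - a) * y)) := by
    rw [← exp_add]; ring_nf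
  have htangent := add_one_le_exp (-((b - a) * y))
  rw [← sub_mul, hsplit, mul_one_div, div_le_iff₀ hy]
  nlinarith [exp_pos (-a * y)]

lemma integrableOn_exp_mul_one_div_sub_Ioi (ha : 0 < a) (hab : a ≤ b) :
    IntegrableOn (fun y => exp (-a * y) * (1 / y) - exp (-b * y) * (1 / y)) (Ioi 0) := by
  have hmeas : Measurable fun y : ℝ => exp (-a * y) * (1 / y) - exp (-b * y) * (1 / y) := by
    fun_prop
  refine ((exp_neg_integrableOn_Ioi 0 ha).const_mul (b - a)).mono' hmeas.aestronglyMeasurable ?_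
  filter_upwards [ae_restrict_mem measurableSet_Ioi] with y (hy : 0 < y)
  rw [norm_of_nonneg (exp_mul_one_div_sub_nonneg hab hy.le)]
  exact exp_mul_one_div_sub_le hy

lemma integral_exp_mul_one_div_sub_Ioi (ha : 0 < a) (hab : a ≤ b) :
    ∫ y in Ioi 0, (exp (-a * y) * (1 / y) - exp (-b * y) * (1 / y)) = log (b / a) := by
  have hform : (fun y : ℝ => y⁻¹ • (exp (-(a * y)) - exp (-(b * y)))) =
      fun y => exp (-a * y) * (1 / y) - exp (-b * y) * (1 / y) := by
    funext y; rw [smul_eq_mul, neg_mul, neg_mul]; ring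
  have hcont : Continuous fun x : ℝ => exp (-x) := by fun_prop
  have hexp : Tendsto (fun x : ℝ => exp (-x)) (𝓝[>] 0) (𝓝 1) := by
    simpa using (hcont.tendsto 0).mono_left nhdsWithin_le_nhds
  have hfrullani := Frullani.integral_Ioi_eq (f := fun x => exp (-x))
    (hcont.continuousOn.locallyIntegrableOn measurableSet_Ioi)
    ha (ha.trans_le hab) hexp tendsto_exp_neg_atTop_nhds_zero
    (hform ▸ integrableOn_exp_mul_one_div_sub_Ioi ha hab)
  rwa [hform, sub_zero, smul_eq_mul, mul_one] at hfrullani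

lemma expIntegralTail_sub_eq (ha : 0 < a) (hab : a ≤ b) (hδ : 0 < δ) :
    expIntegralTail a δ - expIntegralTail b δ =
      ∫ y in Ioi δ, (exp (-a * y) * (1 / y) - exp (-b * y) * (1 / y)) :=
  (integral_sub (integrableOn_exp_mul_one_div_Ioi ha hδ)
    (integrableOn_exp_mul_one_div_Ioi (ha.trans_le hab) hδ)).symm

lemma tendsto_expIntegralTail_sub_nhdsGT_zero (ha : 0 < a) (hab : a ≤ b) :
    Tendsto (fun δ => expIntegralTail a δ - expIntegralTail b δ) (𝓝[>] 0)
      (𝓝 (log (b / a))) := by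
  have h : Tendsto (fun δ => ∫ y in Ioi δ, (exp (-a * y) * (1 / y) - exp (-b * y) * (1 / y)))
      (𝓝[Ici 0] 0) (𝓝 (∫ y in Ioi 0, (exp (-a * y) * (1 / y) - exp (-b * y) * (1 / y)))) :=
    (integrableOn_exp_mul_one_div_sub_Ioi ha hab).continuousWithinAt_Ici_primitive_Ioi
  rw [integral_exp_mul_one_div_sub_Ioi ha hab] at h
  refine (h.mono_left (nhdsWithin_mono _ Ioi_subset_Ici_self)).congr' ?_
  filter_upwards [self_mem_nhdsWithin] with δ (hδ : 0 < δ)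
  exact (expIntegralTail_sub_eq ha hab hδ).symm

lemma expIntegralTail_sub_mem_Icc (ha : 0 < a) (hab : a ≤ b) (hδ : 0 < δ) :
    expIntegralTail a δ - expIntegralTail b δ ∈ Icc 0 (log (b / a)) := by
  rw [expIntegralTail_sub_eq ha hab hδ, ← integral_exp_mul_one_div_sub_Ioi ha hab]
  have hnonneg : ∀ y ∈ Ioi (0 : ℝ), 0 ≤ exp (-a * y) * (1 / y) - exp (-b * y) * (1 / y) :=
    fun y (hy : 0 < y) => exp_mul_one_div_sub_nonneg hab hy.le
  exact ⟨setIntegral_nonneg measurableSet_Ioi fun y (hy : δ < y) => hnonneg y (hδ.trans hy),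
    setIntegral_mono_set (integrableOn_exp_mul_one_div_sub_Ioi ha hab)
      (ae_restrict_of_forall_mem measurableSet_Ioi hnonneg) (Ioi_subset_Ioi hδ.le).eventuallyLE⟩

end Frullani

noncomputable def lowerLimit (k t : ℝ) : ℝ := log ((k - t) / (1 - t))

section LowerLimit

variable {a b k t : ℝ}

lemma log_le_lowerLimit (hk : 1 ≤ k) (ht0 : 0 ≤ t) (ht1 : t < 1) : log k ≤ lowerLimit k t :=
  log_le_log (by linarith) (by rw [le_div_iff₀ (by linarith)]; nlinarith)

lemma lowerLimit_pos (hk : 1 < k) (ht : t < 1) : 0 < lowerLimit k t :=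
  log_pos <| (one_lt_div (sub_pos.2 ht)).2 (by linarith)

lemma continuousOn_lowerLimit (hk : 1 ≤ k) : ContinuousOn (lowerLimit k) (Iio 1) := by
  refine ContinuousOn.log ?_ fun t (ht : t < 1) => (div_pos (by linarith) (by linarith)).ne'
  exact (continuousOn_const.sub continuousOn_id).div (continuousOn_const.sub continuousOn_id)
    fun t (ht : t < 1) => (sub_pos.2 ht).ne'

lemma tendsto_lowerLimit_nhdsGT_one (ht : t < 1) :
    Tendsto (fun k => lowerLimit k t) (𝓝[>] 1) (𝓝[>] 0) := by
  refine tendsto_nhdsWithin_iff.2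
    ⟨?_, eventually_nhdsWithin_of_forall fun k (hk : 1 < k) => lowerLimit_pos hk ht⟩
  have hcont : ContinuousAt (fun k => lowerLimit k t) 1 :=
    ((continuous_id.sub continuous_const).div_const _).continuousAt.log
      (div_ne_zero (sub_pos.2 ht).ne' (sub_pos.2 ht).ne')
  simpa [lowerLimit, div_self (sub_pos.2 ht).ne'] using hcont.tendsto.mono_left nhdsWithin_le_nhds

lemma continuousOn_expIntegralTail_lowerLimit (ha : 0 < a) (hk : 1 < k) :
    ContinuousOn (fun t => expIntegralTail a (lowerLimit k t)) (Iio 1) :=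
  (continuousOn_expIntegralTail ha).comp (continuousOn_lowerLimit hk.le)
    fun _ ht => lowerLimit_pos hk ht

lemma norm_expIntegralTail_lowerLimit_le (ha : 0 < a) (hk : 1 < k) (ht : t ∈ Ioo 0 1) :
    ‖expIntegralTail a (lowerLimit k t)‖ ≤ expIntegralTail a (log k) := by
  rw [norm_of_nonneg (expIntegralTail_nonneg (lowerLimit_pos hk ht.2).le)]
  exact expIntegralTail_antitoneOn ha (log_pos hk) (lowerLimit_pos hk ht.2)
    (log_le_lowerLimit hk.le ht.1.le ht.2)

lemma integrableOn_expIntegralTail_lowerLimit (ha : 0 < a) (hk : 1 < k) :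
    IntegrableOn (fun t => expIntegralTail a (lowerLimit k t)) (Ioo 0 1) :=
  (integrableOn_const (C := expIntegralTail a (log k)) measure_Ioo_lt_top.ne).mono'
    (((continuousOn_expIntegralTail_lowerLimit ha hk).mono Ioo_subset_Iio_self)
      |>.aestronglyMeasurable measurableSet_Ioo)
    (ae_restrict_of_forall_mem measurableSet_Ioo fun _ ht =>
      norm_expIntegralTail_lowerLimit_le ha hk ht)

lemma tendsto_one_sub_mul_integral_expIntegralTail_lowerLimit (ha : 0 < a) :
    Tendsto (fun k => (1 - k) * ∫ t in Ioo 0 1, expIntegralTail a (lowerLimit k t)) (𝓝[>] 1)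
      (𝓝 0) := by
  refine squeeze_zero_norm' ?_ (tendsto_sub_one_mul_expIntegralTail_log_nhdsGT_one ha)
  filter_upwards [self_mem_nhdsWithin] with k (hk : 1 < k)
  have h := norm_setIntegral_le_of_norm_le_const (μ := volume) measure_Ioo_lt_top
    fun t ht => norm_expIntegralTail_lowerLimit_le ha hk ht
  rw [volume_real_Ioo, sub_zero, max_eq_left zero_le_one, mul_one] at h
  rw [norm_mul, norm_sub_rev, norm_of_nonneg (sub_nonneg.2 hk.le)]
  exact mul_le_mul_of_nonneg_left h (sub_nonneg.2 hk.le)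

lemma norm_one_sub_mul_expIntegralTail_sub_le (ha : 0 < a) (hab : a ≤ b) (hk : 1 < k)
    (ht : t ∈ Ioo 0 1) :
    ‖(1 - t) * (expIntegralTail a (lowerLimit k t) - expIntegralTail b (lowerLimit k t))‖ ≤
      log (b / a) := by
  obtain ⟨hD0, hDle⟩ := expIntegralTail_sub_mem_Icc ha hab (lowerLimit_pos hk ht.2)
  rw [norm_mul, norm_of_nonneg (sub_nonneg.2 ht.2.le), norm_of_nonneg hD0]
  nlinarith [ht.1]

lemma aestronglyMeasurable_one_sub_mul_expIntegralTail_sub (ha : 0 < a) (hab : a ≤ b)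
    (hk : 1 < k) :
    AEStronglyMeasurable
      (fun t => (1 - t) * (expIntegralTail a (lowerLimit k t) - expIntegralTail b (lowerLimit k t)))
      (volume.restrict (Ioo 0 1)) :=
  ((continuousOn_const.sub continuousOn_id).mul
    ((continuousOn_expIntegralTail_lowerLimit ha hk).sub
      (continuousOn_expIntegralTail_lowerLimit (ha.trans_le hab) hk))).mono Ioo_subset_Iio_self
    |>.aestronglyMeasurable measurableSet_Ioo

lemma tendsto_integral_one_sub_mul_expIntegralTail_sub (ha : 0 < a) (hab : a ≤ b) :
    Tendsto (fun k => ∫ t in Ioo 0 1,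
        (1 - t) * (expIntegralTail a (lowerLimit k t) - expIntegralTail b (lowerLimit k t)))
      (𝓝[>] 1) (𝓝 (log (b / a) / 2)) := by
  have hlim : ∫ t in Ioo (0 : ℝ) 1, (1 - t) * log (b / a) = log (b / a) / 2 := by
    rw [integral_mul_const, ← integral_Ioc_eq_integral_Ioo,
      ← intervalIntegral.integral_of_le zero_le_one,
      intervalIntegral.integral_sub intervalIntegrable_const intervalIntegral.intervalIntegrable_id]
    norm_num [integral_id]
    ring
  rw [← hlim]
  refine tendsto_integral_filter_of_dominated_convergence (fun _ => log (b / a)) ?_ ?_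
    (integrableOn_const measure_Ioo_lt_top.ne) ?_
  · filter_upwards [self_mem_nhdsWithin] with k (hk : 1 < k)
    exact aestronglyMeasurable_one_sub_mul_expIntegralTail_sub ha hab hk
  · filter_upwards [self_mem_nhdsWithin] with k (hk : 1 < k)
    exact ae_restrict_of_forall_mem measurableSet_Ioo fun _ ht =>
      norm_one_sub_mul_expIntegralTail_sub_le ha hab hk ht
  · exact ae_restrict_of_forall_mem measurableSet_Ioo fun t ht =>
      ((tendsto_expIntegralTail_sub_nhdsGT_zero ha hab).comp
        (tendsto_lowerLimit_nhdsGT_one ht.2)).const_mul (1 - t)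

end LowerLimit

theorem tendsto_integral_expIntegralTail_lowerLimit {M : ℝ} (hM : 1 < M) :
    Tendsto (fun k => ∫ t in Ioo 0 1, ((t - k) * expIntegralTail M (lowerLimit k t) +
        (1 - t) * expIntegralTail (M - 1) (lowerLimit k t)))
      (𝓝[>] 1) (𝓝 (log (M / (M - 1)) / 2)) := by
  have ha : 0 < M - 1 := sub_pos.2 hM
  have hab : M - 1 ≤ M := sub_le_self _ zero_le_one
  have hsplit : ∀ᶠ k in 𝓝[>] 1,
      (∫ t in Ioo 0 1, (1 - t) * (expIntegralTail (M - 1) (lowerLimit k t) -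
          expIntegralTail M (lowerLimit k t))) +
        (1 - k) * ∫ t in Ioo 0 1, expIntegralTail M (lowerLimit k t) =
      ∫ t in Ioo 0 1, ((t - k) * expIntegralTail M (lowerLimit k t) +
        (1 - t) * expIntegralTail (M - 1) (lowerLimit k t)) := by
    filter_upwards [self_mem_nhdsWithin] with k (hk : 1 < k)
    have hfirst := (integrableOn_const (C := log (M / (M - 1))) measure_Ioo_lt_top.ne).mono'
      (aestronglyMeasurable_one_sub_mul_expIntegralTail_sub ha hab hk)
      (ae_restrict_of_forall_mem measurableSet_Ioo fun _ ht =>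
        norm_one_sub_mul_expIntegralTail_sub_le ha hab hk ht)
    have hsecond :=
      (integrableOn_expIntegralTail_lowerLimit (ha.trans_le hab) hk).const_mul (1 - k)
    rw [← integral_const_mul, ← integral_add hfirst hsecond]
    congr 1 with t
    ring
  simpa using ((tendsto_integral_one_sub_mul_expIntegralTail_sub ha hab).add
    (tendsto_one_sub_mul_integral_expIntegralTail_lowerLimit (ha.trans_le hab))).congr' hsplit

theorem vg_atm_limit_general (C M : ℝ) (hM : 1 < M) :
    Tendsto
      (fun k : ℝ => ∫ t in Ioo (0 : ℝ) 1,
        ((t - k) * Jfun C k t M + (1 - t) * Jfun C k t (M - 1)))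
      (𝓝[>] 1)
      (𝓝 (C * ((1 / 2) * Real.log ((1 + 1 / (2 * M - 1)) / (1 - 1 / (2 * M - 1)))))) := by
  have hJ (k t a : ℝ) : Jfun C k t a = C * expIntegralTail a (lowerLimit k t) := rfl
  have harctanh : (1 + 1 / (2 * M - 1)) / (1 - 1 / (2 * M - 1)) = M / (M - 1) := by
    have h₁ : 2 * M - 1 ≠ 0 := by linarith
    have h₂ : M - 1 ≠ 0 := by linarith
    rw [one_add_div h₁, one_sub_div h₁, div_div_div_cancel_right₀ h₁,
      div_eq_div_iff (by linarith) h₂]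
    ring
  rw [harctanh, one_div_mul_eq_div]
  refine ((tendsto_integral_expIntegralTail_lowerLimit hM).const_mul C).congr fun k => ?_
  rw [← integral_const_mul]
  congr 1 with t
  rw [hJ, hJ]
  ring

/-- ATM limit for the VG Asian call coefficient: for `C > 0`, `M > 1`,
`lim_{k↘1} ∫₀¹ [(t - k) J(t,M) + (1-t) J(t,M-1)] dt = C·arctanh(1/(2M-1))`,
where `arctanh x = (1/2) log((1+x)/(1-x))`. -/
theorem vg_atm_limit (C M : ℝ) (hC : 0 < C) (hM : 1 < M) :
    Tendsto
      (fun k : ℝ => ∫ t in Ioo (0 : ℝ) 1,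
        ((t - k) * Jfun C k t M + (1 - t) * Jfun C k t (M - 1)))
      (𝓝[>] 1)
      (𝓝 (C * ((1 / 2) * Real.log ((1 + 1 / (2 * M - 1)) / (1 - 1 / (2 * M - 1)))))) :=
  vg_atm_limit_general C M hM
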